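/- arXiv:2104.04376 — 2 statements merged into one kernel-verified Lean document; each statement's English description precedes it below -/
import Mathlib

section
/- Let B = ω₀·[[-1,0,0,-α],[α,-1,0,0],[0,α,-1,0],[0,0,α,-1]] with ω₀ > 0 and 0 < α < √2. Then the symmetric part B_s = (1/2)(B + Bᵀ) is negative definite. -/
/-!
Since `xᵀ Bᵀ x = xᵀ B x`, the quadratic form of `B_s` is `ω₀` times that of the unscaled matrix,
`-‖x‖² + α (x₀x₁ + x₁x₂ + x₂x₃ - x₃x₀)`. Four times its negative is the sum of squares
`(2x₁ - α(x₀ + x₂))² + (2x₃ + α(x₀ - x₂))² + 2(2 - α²)(x₀² + x₂²)`, which for `α² < 2` vanishes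
only at `x = 0`.
-/

open Matrix

theorem dotProduct_half_smul_add_transpose_mulVec {K n : Type*} [Field K] [NeZero (2 : K)]
    [Fintype n] (A : Matrix n n K) (x : n → K) :
    x ⬝ᵥ ((((1 : K) / 2) • (A + Aᵀ)) *ᵥ x) = x ⬝ᵥ (A *ᵥ x) := by
  have hT : x ⬝ᵥ (Aᵀ *ᵥ x) = x ⬝ᵥ (A *ᵥ x) := by
    rw [mulVec_transpose, dotProduct_comm, ← dotProduct_mulVec]
  rw [smul_mulVec, dotProduct_smul, add_mulVec, dotProduct_add, hT, smul_eq_mul]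
  field_simp
  ring

/-- The paper's `B` is `ω₀ • moogMatrix α`. -/
def moogMatrix {R : Type*} [Ring R] (α : R) : Matrix (Fin 4) (Fin 4) R :=
  !![-1, 0, 0, -α;
     α, -1, 0, 0;
     0, α, -1, 0;
     0, 0, α, -1]

theorem dotProduct_moogMatrix_mulVec {R : Type*} [CommRing R] (α : R) (x : Fin 4 → R) :
    x ⬝ᵥ (moogMatrix α *ᵥ x) =
      -(x ⬝ᵥ x) + α * (x 0 * x 1 + x 1 * x 2 + x 2 * x 3 - x 3 * x 0) := by
  simp only [dotProduct, mulVec, moogMatrix, of_apply, cons_val', cons_val_fin_one,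
    Fin.sum_univ_four, cons_val_zero, cons_val_one, cons_val]
  ring

theorem neg_four_mul_dotProduct_moogMatrix_mulVec {R : Type*} [CommRing R] (α : R)
    (x : Fin 4 → R) :
    -4 * (x ⬝ᵥ (moogMatrix α *ᵥ x)) =
      (2 * x 1 - α * (x 0 + x 2)) ^ 2 + (2 * x 3 + α * (x 0 - x 2)) ^ 2
        + 2 * (2 - α ^ 2) * (x 0 ^ 2 + x 2 ^ 2) := by
  rw [dotProduct_moogMatrix_mulVec]
  simp only [dotProduct, Fin.sum_univ_four]
  ring

theorem dotProduct_moogMatrix_mulVec_neg {R : Type*} [Field R] [LinearOrder R]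
    [IsStrictOrderedRing R] {α : R} (hα : α ^ 2 < 2) {x : Fin 4 → R} (hx : x ≠ 0) :
    x ⬝ᵥ (moogMatrix α *ᵥ x) < 0 := by
  by_contra! hnonneg
  have hsos := neg_four_mul_dotProduct_moogMatrix_mulVec α x
  have h02 : x 0 ^ 2 + x 2 ^ 2 = 0 := by
    nlinarith [sq_nonneg (2 * x 1 - α * (x 0 + x 2)), sq_nonneg (2 * x 3 + α * (x 0 - x 2)),
      sq_nonneg (x 0), sq_nonneg (x 2)]
  have h0 : x 0 = 0 := by nlinarith [sq_nonneg (x 0), sq_nonneg (x 2)]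
  have h2 : x 2 = 0 := by nlinarith [sq_nonneg (x 0), sq_nonneg (x 2)]
  rw [h0, h2] at hsos
  have h1 : x 1 = 0 := by nlinarith [sq_nonneg (x 1), sq_nonneg (x 3)]
  have h3 : x 3 = 0 := by nlinarith [sq_nonneg (x 1), sq_nonneg (x 3)]
  exact hx (funext fun i => by fin_cases i <;> assumption)

theorem scaled_moog_symmetric_part_negdef (ω₀ α : ℝ) (hω : 0 < ω₀)
    (hα : 0 < α) (hα2 : α < Real.sqrt 2) :
    ∀ x : Fin 4 → ℝ, x ≠ 0 →
      x ⬝ᵥ ((((1:ℝ)/2) • (ω₀ • !![(-1 : ℝ), 0, 0, -α;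
                                   α, -1, 0, 0;
                                   0, α, -1, 0;
                                   0, 0, α, -1]
          + (ω₀ • !![(-1 : ℝ), 0, 0, -α;
                     α, -1, 0, 0;
                     0, α, -1, 0;
                     0, 0, α, -1])ᵀ)) *ᵥ x) < 0 := by
  intro x hx
  have hα_sq : α ^ 2 < 2 := (Real.lt_sqrt hα.le).mp hα2
  rw [dotProduct_half_smul_add_transpose_mulVec, smul_mulVec, dotProduct_smul, smul_eq_mul]
  exact mul_neg_of_pos_of_neg hω (dotProduct_moogMatrix_mulVec_neg hα_sq hx)
end

section
/- Let α = √2·r^{1/4} with 0 < r < 1, ω₀ > 0, d = max(1, α), and let x : ℝ → ℝ⁴ be a differentiable solution of ẋ₁ = ω₀(-tanh(x₁) - tanh(α⁴x₄)), ẋ₂ = ω₀(-tanh(x₂)+tanh(x₁)), ẋ₃ = ω₀(-tanh(x₃)+tanh(x₂)), ẋ₄ = ω₀(-tanh(x₄)+tanh(x₃)). With w = D·x for D = diag(1,d,d²,d³), the function V(w) = ln(cosh(w₁)) + d²ln(cosh(w₂/d)) + d⁴ln(cosh(w₃/d²)) + (d²/α⁴)ln(cosh(α⁴w₄/d³)) is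 a strict Lyapunov function: V(0)=0, V(w)>0 for w≠0, and d/dt V(w(t)) < 0 whenever w(t) ≠ 0. -/
/-!
Write `a, b, c, e` for `tanh x₁, tanh x₂, tanh x₃, tanh (α⁴ x₄)`. In the coordinates `x`, `V` is a
positively weighted sum of `log cosh`'s, and along solutions `dV/dt` is `ω₀` times a quadratic
expression in `a, b, c, e` and `tanh x₄`. Concavity of `tanh` on `[0, ∞)` gives
`e² ≤ d⁴ · e · tanh x₄`, which turns `d² · dV/dt / ω₀` into at most `-|y|² + d · B(y)` for
`y = (d a, d² b, d³ c, e)` and `B(y) = y₀y₁ + y₁y₂ + y₂y₃ - y₀y₃`. Since `√2 · B(y) ≤ |y|²`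
(the difference is half a sum of two squares), this is negative for `y ≠ 0` because
`d = max 1 α < √2`, which is where `r < 1` enters.
-/

open Real Set

namespace Real

theorem hasDerivAt_tanh (x : ℝ) : HasDerivAt tanh (1 / cosh x ^ 2) x := by
  have h := (hasDerivAt_sinh x).div (hasDerivAt_cosh x) (cosh_pos x).ne'
  rw [show sinh / cosh = tanh from funext fun y => (tanh_eq_sinh_div_cosh y).symm] at h
  refine h.congr_deriv ?_
  rw [← cosh_sq_sub_sinh_sq x]
  ring

theorem deriv_tanh : deriv tanh = fun x => 1 / cosh x ^ 2 :=
  funext fun x => (hasDerivAt_tanh x).deriv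

theorem tanh_strictMono : StrictMono tanh :=
  strictMono_of_deriv_pos fun x => by rw [deriv_tanh]; positivity

theorem tanh_eq_zero_iff {x : ℝ} : tanh x = 0 ↔ x = 0 :=
  tanh_injective.eq_iff' tanh_zero

theorem tanh_nonneg {x : ℝ} (hx : 0 ≤ x) : 0 ≤ tanh x :=
  tanh_zero ▸ tanh_strictMono.monotone hx

theorem concaveOn_tanh : ConcaveOn ℝ (Ici 0) tanh := by
  refine AntitoneOn.concaveOn_of_deriv (convex_Ici 0)
    (fun x _ => (hasDerivAt_tanh x).continuousAt.continuousWithinAt)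
    (fun x _ => (hasDerivAt_tanh x).differentiableAt.differentiableWithinAt) ?_
  intro x hx y _ hxy
  rw [interior_Ici] at hx
  simp only [deriv_tanh]
  have : cosh x ≤ cosh y :=
    cosh_le_cosh.2 (by rwa [abs_of_pos hx, abs_of_pos (hx.trans_le hxy)])
  gcongr

theorem tanh_mul_le_mul_tanh {k x : ℝ} (hk : 1 ≤ k) (hx : 0 ≤ x) : tanh (k * x) ≤ k * tanh x := by
  have hk0 : 0 < k := one_pos.trans_le hk
  have := concaveOn_tanh.2 (mem_Ici.2 (mul_nonneg hk0.le hx)) (mem_Ici.2 le_rfl)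
    (inv_nonneg.2 hk0.le) (sub_nonneg.2 (inv_le_one_of_one_le₀ hk)) (add_sub_cancel _ _)
  simp only [smul_eq_mul, mul_zero, add_zero, tanh_zero, inv_mul_cancel_left₀ hk0.ne'] at this
  rwa [inv_mul_le_iff₀ hk0] at this

end Real

theorem tanh_mul_sq_le {k m : ℝ} (hk : 0 ≤ k) (hm : 1 ≤ m) (hkm : k ≤ m) (x : ℝ) :
    tanh (k * x) ^ 2 ≤ m * (tanh x * tanh (k * x)) := by
  wlog hx : 0 ≤ x generalizing x
  · simpa [mul_neg, tanh_neg] using this (-x) (by linarith)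
  have hkx : tanh (k * x) ≤ m * tanh x :=
    (tanh_strictMono.monotone (by nlinarith)).trans (tanh_mul_le_mul_tanh hm hx)
  nlinarith [tanh_nonneg (mul_nonneg hk hx)]

theorem HasDerivAt.log_cosh {f : ℝ → ℝ} {f' x : ℝ} (hf : HasDerivAt f f' x) :
    HasDerivAt (fun y => Real.log (Real.cosh (f y))) (tanh (f x) * f') x := by
  refine (((hasDerivAt_cosh (f x)).comp x hf).log (cosh_pos (f x)).ne').congr_deriv ?_
  rw [Function.comp_apply, tanh_eq_sinh_div_cosh]
  ring

theorem sum_mul_log_cosh_pos {ι : Type*} [Fintype ι] {c k v : ι → ℝ} (hc : ∀ i, 0 < c i)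
    (hk : ∀ i, k i ≠ 0) (hv : v ≠ 0) : 0 < ∑ i, c i * log (cosh (k i * v i)) := by
  obtain ⟨i, hi⟩ := Function.ne_iff.1 hv
  refine Finset.sum_pos' (fun j _ => mul_nonneg (hc j).le (log_nonneg (one_le_cosh _)))
    ⟨i, Finset.mem_univ i, mul_pos (hc i) (log_pos (one_lt_cosh.2 (mul_ne_zero (hk i) hi)))⟩

theorem sqrt_two_mul_cyclic_le (y₀ y₁ y₂ y₃ : ℝ) :
    √2 * (y₀ * y₁ + y₁ * y₂ + y₂ * y₃ - y₀ * y₃) ≤ y₀ ^ 2 + y₁ ^ 2 + y₂ ^ 2 + y₃ ^ 2 := by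
  nlinarith [sq_nonneg (√2 * y₀ - y₁ + y₃), sq_nonneg (√2 * y₂ - y₁ - y₃),
    sq_sqrt (show (0:ℝ) ≤ 2 by norm_num)]

theorem moog_quadratic_neg {d a b c t e : ℝ} (hd : 0 < d) (hd2 : d < √2)
    (he : e ^ 2 ≤ d ^ 4 * (t * e)) (hne : a ≠ 0 ∨ b ≠ 0 ∨ c ≠ 0 ∨ e ≠ 0) :
    a * (-a - e) + d ^ 2 * (b * (-b + a)) + d ^ 4 * (c * (-c + b)) + d ^ 2 * (e * (-t + c)) < 0 := by
  set Y := (d * a) ^ 2 + (d ^ 2 * b) ^ 2 + (d ^ 3 * c) ^ 2 + e ^ 2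
  set B := d * a * (d ^ 2 * b) + d ^ 2 * b * (d ^ 3 * c) + d ^ 3 * c * e - d * a * e
  have hY : 0 < Y := by rcases hne with h | h | h | h <;> positivity
  have hB : √2 * B ≤ Y := sqrt_two_mul_cyclic_le (d * a) (d ^ 2 * b) (d ^ 3 * c) e
  have hQ : d ^ 2 * (a * (-a - e) + d ^ 2 * (b * (-b + a)) + d ^ 4 * (c * (-c + b))
      + d ^ 2 * (e * (-t + c))) ≤ -Y + d * B := by
    linear_combination he
  have hs : 0 < √2 := by positivity
  have hP : -Y + d * B < 0 := neg_of_mul_neg_right (by nlinarith) hs.le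
  exact neg_of_mul_neg_right (hQ.trans_lt hP) (by positivity)

theorem moog_dissipation_neg {d k : ℝ} (hd : 1 ≤ d) (hd2 : d < √2) (hk : 0 < k) (hkd : k ≤ d ^ 4)
    {x : Fin 4 → ℝ} (hx : x ≠ 0) :
    tanh (x 0) * (-tanh (x 0) - tanh (k * x 3)) + d ^ 2 * (tanh (x 1) * (-tanh (x 1) + tanh (x 0)))
      + d ^ 4 * (tanh (x 2) * (-tanh (x 2) + tanh (x 1)))
      + d ^ 2 * (tanh (k * x 3) * (-tanh (x 3) + tanh (x 2))) < 0 := by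
  refine moog_quadratic_neg (one_pos.trans_le hd) hd2
    (tanh_mul_sq_le hk.le (one_le_pow₀ hd) hkd (x 3)) ?_
  obtain ⟨i, hi⟩ := Function.ne_iff.1 hx
  fin_cases i <;> simp_all [tanh_eq_zero_iff, hk.ne']

theorem moog_lyapunov_pos {d k : ℝ} (hd : 0 < d) (hk : 0 < k) {v : Fin 4 → ℝ} (hv : v ≠ 0) :
    0 < log (cosh (v 0)) + d ^ 2 * log (cosh (v 1 / d)) + d ^ 4 * log (cosh (v 2 / d ^ 2))
      + d ^ 2 / k * log (cosh (k * v 3 / d ^ 3)) := by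
  have := sum_mul_log_cosh_pos (c := ![1, d ^ 2, d ^ 4, d ^ 2 / k])
    (k := ![1, d⁻¹, (d ^ 2)⁻¹, k / d ^ 3]) (fun i => by fin_cases i <;> simp <;> positivity)
    (fun i => by fin_cases i <;> simp [hd.ne', hk.ne']) hv
  convert this using 1
  simp only [Fin.sum_univ_four, Matrix.cons_val_zero, Matrix.cons_val_one, Matrix.cons_val, one_mul]
  ring_nf

theorem sqrt_two_mul_rpow_mem_Ioo {r : ℝ} (hr : 0 < r) (hr1 : r < 1) :
    √2 * r ^ ((1:ℝ) / 4) ∈ Ioo 0 √2 := by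
  have h1 : r ^ ((1:ℝ) / 4) < 1 := rpow_lt_one hr.le hr1 (by norm_num)
  exact ⟨by positivity, mul_lt_of_lt_one_right (by positivity) h1⟩

theorem moog_lyapunov_full_range (ω₀ r : ℝ) (hω : 0 < ω₀)
    (hr : 0 < r) (hr1 : r < 1)
    (α : ℝ) (hα : α = Real.sqrt 2 * r ^ ((1:ℝ)/4))
    (d : ℝ) (hd : d = max 1 α)
    (x : ℝ → Fin 4 → ℝ)
    (h1 : ∀ t, HasDerivAt (fun s => x s 0)
      (ω₀ * (-Real.tanh (x t 0) - Real.tanh (α^4 * x t 3))) t)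
    (h2 : ∀ t, HasDerivAt (fun s => x s 1)
      (ω₀ * (-Real.tanh (x t 1) + Real.tanh (x t 0))) t)
    (h3 : ∀ t, HasDerivAt (fun s => x s 2)
      (ω₀ * (-Real.tanh (x t 2) + Real.tanh (x t 1))) t)
    (h4 : ∀ t, HasDerivAt (fun s => x s 3)
      (ω₀ * (-Real.tanh (x t 3) + Real.tanh (x t 2))) t)
    (V : (Fin 4 → ℝ) → ℝ)
    (hV : ∀ v : Fin 4 → ℝ, V v =
      Real.log (Real.cosh (v 0))
      + d^2 * Real.log (Real.cosh (v 1 / d))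
      + d^4 * Real.log (Real.cosh (v 2 / d^2))
      + (d^2 / α^4) * Real.log (Real.cosh (α^4 * v 3 / d^3)))
    (w : ℝ → Fin 4 → ℝ)
    (hw : ∀ t, w t = ![x t 0, d * x t 1, d^2 * x t 2, d^3 * x t 3]) :
    V 0 = 0
    ∧ (∀ v : Fin 4 → ℝ, v ≠ 0 → 0 < V v)
    ∧ ∀ t, w t ≠ 0 → deriv (fun s => V (w s)) t < 0 := by
  obtain ⟨hα0, hα2⟩ : α ∈ Ioo 0 √2 := hα ▸ sqrt_two_mul_rpow_mem_Ioo hr hr1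
  have hd1 : 1 ≤ d := hd ▸ le_max_left 1 α
  have hd0 : 0 < d := one_pos.trans_le hd1
  have hd2 : d < √2 := hd ▸ max_lt one_lt_sqrt_two hα2
  refine ⟨by simp [hV], fun v hv => hV v ▸ moog_lyapunov_pos hd0 (by positivity) hv, fun t ht => ?_⟩
  have hx : x t ≠ 0 := fun hx => ht (by simp [hw, hx])
  have hVw : ∀ s, V (w s) = log (cosh (x s 0)) + d ^ 2 * log (cosh (x s 1))
      + d ^ 4 * log (cosh (x s 2)) + d ^ 2 / α ^ 4 * log (cosh (α ^ 4 * x s 3)) := by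
    intro s
    rw [hV, hw]
    simp only [Matrix.cons_val_zero, Matrix.cons_val_one, Matrix.cons_val]
    field_simp
  have hderiv : HasDerivAt (fun s => V (w s)) _ t := ((((h1 t).log_cosh.add
    ((h2 t).log_cosh.const_mul (d ^ 2))).add ((h3 t).log_cosh.const_mul (d ^ 4))).add
    (((h4 t).const_mul (α ^ 4)).log_cosh.const_mul (d ^ 2 / α ^ 4))).congr_of_eventuallyEq
    (.of_forall hVw)
  have hα4d : α ^ 4 ≤ d ^ 4 := pow_le_pow_left₀ hα0.le (hd ▸ le_max_right 1 α) 4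
  rw [hderiv.deriv]
  refine lt_of_eq_of_lt ?_
    (mul_neg_of_pos_of_neg hω (moog_dissipation_neg hd1 hd2 (by positivity) hα4d hx))
  field_simp
end
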